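/- Let γ ∈ ℂᵐ, let L be an l×m complex matrix and R an l×n complex matrix, and set X = Δ_m(γ) Lᴴ R. Then for all a ∈ ℂᵐ with max_i |a_i| ≤ 1 and all m×n complex matrices B with ‖B‖_∞ ≤ 1, the vector T_X(a,B) ∈ ℂⁿ with entries T_X(a,B)_j = ∑_i a_i X_{ij} B_{ij} satisfies ‖T_X(a,B)‖₂ ≤ ‖γ‖₂ · ‖L‖_c · ‖R‖_c. -/

import Mathlib

open Matrix BigOperators

/-- The ℓ²→ℓ² operator norm of a complex matrix. -/
noncomputable def opNorm {m n : ℕ} (A : Matrix (Fin m) (Fin n) ℂ) : ℝ :=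
  ‖(Matrix.toEuclideanLin A).toContinuousLinearMap‖

/-- The Euclidean norm of a complex vector. -/
noncomputable def eNorm {n : ℕ} (ξ : Fin n → ℂ) : ℝ :=
  Real.sqrt (∑ j, ‖ξ j‖ ^ 2)

/-- The column norm: the maximum Euclidean norm of a column. -/
noncomputable def colNorm {l m : ℕ} (L : Matrix (Fin l) (Fin m) ℂ) : ℝ :=
  ⨆ j : Fin m, Real.sqrt (∑ i, ‖L i j‖ ^ 2)

/-!
With `u_k i = conj (L k i) * a i * γ i`, the entries factor as `T_j = ∑_k R k j * (u_k ᵥ* B) j`.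
Cauchy–Schwarz in `k` gives `|T_j|² ≤ ‖R‖_c² ∑_k |(u_k ᵥ* B) j|²`, and summing over `j`,
`‖T‖² ≤ ‖R‖_c² ∑_k ‖u_k ᵥ* B‖² ≤ ‖R‖_c² ∑_k ‖u_k‖²`, because `u ᵥ* B = conj (Bᴴ *ᵥ conj u)` and
`‖Bᴴ‖ = ‖B‖ ≤ 1`. Finally `∑_k ‖u_k‖² = ∑_i |a_i γ_i|² ∑_k |L k i|² ≤ ‖L‖_c² ‖γ‖²`.
-/

lemma eNorm_nonneg {n : ℕ} (ξ : Fin n → ℂ) : 0 ≤ eNorm ξ :=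
  Real.sqrt_nonneg _

lemma eNorm_sq {n : ℕ} (ξ : Fin n → ℂ) : eNorm ξ ^ 2 = ∑ j, ‖ξ j‖ ^ 2 :=
  Real.sq_sqrt (by positivity)

lemma eNorm_star {n : ℕ} (ξ : Fin n → ℂ) : eNorm (star ξ) = eNorm ξ := by
  simp [eNorm]

lemma colNorm_nonneg {l m : ℕ} (L : Matrix (Fin l) (Fin m) ℂ) : 0 ≤ colNorm L :=
  Real.iSup_nonneg fun _ => Real.sqrt_nonneg _

lemma sum_sq_norm_le_colNorm_sq {l m : ℕ} (L : Matrix (Fin l) (Fin m) ℂ) (j : Fin m) :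
    ∑ i, ‖L i j‖ ^ 2 ≤ colNorm L ^ 2 := by
  rw [← Real.sqrt_le_left (colNorm_nonneg L)]
  exact le_ciSup (f := fun j => Real.sqrt (∑ i, ‖L i j‖ ^ 2)) (Set.finite_range _).bddAbove j

open scoped Matrix.Norms.L2Operator in
lemma opNorm_conjTranspose {m n : ℕ} (A : Matrix (Fin m) (Fin n) ℂ) : opNorm Aᴴ = opNorm A :=
  l2_opNorm_conjTranspose A

lemma eNorm_mulVec_le {m n : ℕ} (A : Matrix (Fin m) (Fin n) ℂ) (x : Fin n → ℂ) :
    eNorm (A *ᵥ x) ≤ opNorm A * eNorm x := by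
  simpa [opNorm, eNorm, EuclideanSpace.norm_eq, Matrix.toLpLin_toLp] using
    (Matrix.toEuclideanLin A).toContinuousLinearMap.le_opNorm (WithLp.toLp 2 x)

lemma eNorm_vecMul_le {m n : ℕ} (A : Matrix (Fin m) (Fin n) ℂ) (x : Fin m → ℂ) :
    eNorm (x ᵥ* A) ≤ opNorm A * eNorm x := by
  have h : x ᵥ* A = star (Aᴴ *ᵥ star x) := by
    rw [star_mulVec, star_star, conjTranspose_conjTranspose]
  rw [h, eNorm_star, ← opNorm_conjTranspose, ← eNorm_star x]
  exact eNorm_mulVec_le _ _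

lemma eNorm_sum_mul_sq_le {l n : ℕ} (R : Matrix (Fin l) (Fin n) ℂ) (v : Fin l → Fin n → ℂ) :
    eNorm (fun j => ∑ k, R k j * v k j) ^ 2 ≤ colNorm R ^ 2 * ∑ k, eNorm (v k) ^ 2 := by
  simp only [eNorm_sq]
  rw [Finset.sum_comm, Finset.mul_sum]
  refine Finset.sum_le_sum fun j _ => ?_
  calc ‖∑ k, R k j * v k j‖ ^ 2 ≤ (∑ k, ‖R k j‖ * ‖v k j‖) ^ 2 := by
        gcongr
        exact (norm_sum_le _ _).trans_eq (by simp only [norm_mul])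
    _ ≤ (∑ k, ‖R k j‖ ^ 2) * ∑ k, ‖v k j‖ ^ 2 := Finset.sum_mul_sq_le_sq_mul_sq _ _ _
    _ ≤ colNorm R ^ 2 * ∑ k, ‖v k j‖ ^ 2 := by
        gcongr
        exact sum_sq_norm_le_colNorm_sq R j

lemma sum_eNorm_star_mul_sq_le {l m : ℕ} (L : Matrix (Fin l) (Fin m) ℂ) (c : Fin m → ℂ) :
    ∑ k, eNorm (fun i => star (L k i) * c i) ^ 2 ≤ colNorm L ^ 2 * eNorm c ^ 2 := by
  simp only [eNorm_sq, norm_mul, norm_star, mul_pow]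
  rw [Finset.sum_comm, Finset.mul_sum]
  refine Finset.sum_le_sum fun i _ => ?_
  rw [← Finset.sum_mul]
  gcongr
  exact sum_sq_norm_le_colNorm_sq L i

lemma eNorm_mul_le_of_norm_le_one {m : ℕ} {a : Fin m → ℂ} (ha : ∀ i, ‖a i‖ ≤ 1)
    (γ : Fin m → ℂ) : eNorm (fun i => a i * γ i) ≤ eNorm γ := by
  refine Real.sqrt_le_sqrt (Finset.sum_le_sum fun i _ => ?_)
  rw [norm_mul]
  gcongr
  exact mul_le_of_le_one_left (norm_nonneg _) (ha i)

lemma sum_mul_diagonal_mul_conjTranspose_mul_apply {l m n : ℕ} (γ a : Fin m → ℂ)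
    (L : Matrix (Fin l) (Fin m) ℂ) (R : Matrix (Fin l) (Fin n) ℂ) (B : Matrix (Fin m) (Fin n) ℂ)
    (j : Fin n) :
    ∑ i, a i * (diagonal γ * (Lᴴ * R)) i j * B i j
      = ∑ k, R k j * ((fun i => star (L k i) * (a i * γ i)) ᵥ* B) j := by
  simp only [diagonal_mul]
  simp only [mul_apply, conjTranspose_apply, vecMul, dotProduct, Finset.mul_sum, Finset.sum_mul]
  rw [Finset.sum_comm]
  exact Finset.sum_congr rfl fun k _ => Finset.sum_congr rfl fun i _ => by ring

/-- If `X = Δ_m(γ) Lᴴ R`, then for every `a` with `max_i |a_i| ≤ 1` and `B` with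
`‖B‖_∞ ≤ 1`, the vector `T_X(a,B)` has Euclidean norm at most `‖γ‖₂ ‖L‖_c ‖R‖_c`. -/
theorem Tx_le_of_factorization
    (l m n : ℕ) (γ : Fin m → ℂ)
    (L : Matrix (Fin l) (Fin m) ℂ) (R : Matrix (Fin l) (Fin n) ℂ)
    (X : Matrix (Fin m) (Fin n) ℂ) (hX : X = Matrix.diagonal γ * (Lᴴ * R))
    (a : Fin m → ℂ) (B : Matrix (Fin m) (Fin n) ℂ)
    (ha : ∀ i, ‖a i‖ ≤ 1) (hB : opNorm B ≤ 1) :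
    eNorm (fun j => ∑ i, a i * X i j * B i j) ≤ eNorm γ * colNorm L * colNorm R := by
  subst hX
  simp only [sum_mul_diagonal_mul_conjTranspose_mul_apply]
  set u : Fin l → Fin m → ℂ := fun k i => star (L k i) * (a i * γ i)
  have hu : ∀ k, eNorm (u k ᵥ* B) ≤ eNorm (u k) := fun k =>
    (eNorm_vecMul_le B (u k)).trans (mul_le_of_le_one_left (eNorm_nonneg _) hB)
  refine le_of_pow_le_pow_left₀ two_ne_zero
    (by have := eNorm_nonneg γ; have := colNorm_nonneg L; have := colNorm_nonneg R; positivity) ?_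
  calc eNorm (fun j => ∑ k, R k j * (u k ᵥ* B) j) ^ 2
      ≤ colNorm R ^ 2 * ∑ k, eNorm (u k ᵥ* B) ^ 2 := eNorm_sum_mul_sq_le R _
    _ ≤ colNorm R ^ 2 * ∑ k, eNorm (u k) ^ 2 := by
        gcongr with k
        exacts [eNorm_nonneg _, hu k]
    _ ≤ colNorm R ^ 2 * (colNorm L ^ 2 * eNorm (fun i => a i * γ i) ^ 2) := by
        gcongr
        exact sum_eNorm_star_mul_sq_le L _
    _ ≤ colNorm R ^ 2 * (colNorm L ^ 2 * eNorm γ ^ 2) := by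
        gcongr
        exacts [eNorm_nonneg _, eNorm_mul_le_of_norm_le_one ha γ]
    _ = (eNorm γ * colNorm L * colNorm R) ^ 2 := by ring
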